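/- The area of the plane region bounded by a 3-bulb of radius r — i.e., the region enclosed by the closed curve formed by three convex quarter-circles of radius r and the arcs completing it as in the square Tangle construction — equals 4r², the area of a square of side length 2r. -/

import Mathlib

open MeasureTheory

/-- The open disk of radius `r` centered at `(a, b)` in the plane. -/
def diskAt (a b r : ℝ) : Set (ℝ × ℝ) :=
  {p : ℝ × ℝ | (p.1 - a) ^ 2 + (p.2 - b) ^ 2 < r ^ 2}

/-- The region enclosed by a 3-bulb of radius `r`: it is bounded by the three
convex quarter-circles of the circle centered at `(r, r)` together with the
concave quarter-circle arcs of the circles centered at `(-r, r)`, `(-r, -r)`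
and `(r, -r)`; concretely, it is the disk centered at `(r, r)` together with
the part of the square `[-r, r] × [-r, r]` lying outside the three other
disks. -/
def threeBulbRegion (r : ℝ) : Set (ℝ × ℝ) :=
  diskAt r r r ∪
    ((Set.Icc (-r) r ×ˢ Set.Icc (-r) r) \
      (diskAt (-r) r r ∪ diskAt (-r) (-r) r ∪ diskAt r (-r) r))

/-!
Cut along the lines through the bulb's centre `(r, r)`. The part of the bulb disk outside the
square `[-r, r]²` consists of three quarter-disks, lying in the tiles `[r, 3r] × [-r, r]`,
`[r, 3r]²` and `[-r, r] × [r, 3r]`. Translating these tiles by `-(2r, 0)`, `-(2r, 2r)` and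
`-(0, 2r)` onto the square carries the quarter-disks exactly onto the parts of the three corner
disks inside the square. So the bulb adds to the square as much area as the corner disks remove.
-/

open Set

def centeredSquare (r : ℝ) : Set (ℝ × ℝ) := Icc (-r) r ×ˢ Icc (-r) r

def cornerDisks (r : ℝ) : Set (ℝ × ℝ) :=
  diskAt (-r) r r ∪ diskAt (-r) (-r) r ∪ diskAt r (-r) r

lemma threeBulbRegion_eq (r : ℝ) :
    threeBulbRegion r = diskAt r r r ∪ (centeredSquare r \ cornerDisks r) := rfl

lemma measurableSet_diskAt (a b r : ℝ) : MeasurableSet (diskAt a b r) :=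
  measurableSet_lt (by fun_prop) (by fun_prop)

lemma measurableSet_centeredSquare (r : ℝ) : MeasurableSet (centeredSquare r) :=
  measurableSet_Icc.prod measurableSet_Icc

lemma measurableSet_cornerDisks (r : ℝ) : MeasurableSet (cornerDisks r) :=
  ((measurableSet_diskAt _ _ _).union (measurableSet_diskAt _ _ _)).union
    (measurableSet_diskAt _ _ _)

lemma volume_centeredSquare {r : ℝ} (hr : 0 ≤ r) :
    volume (centeredSquare r) = ENNReal.ofReal (4 * r ^ 2) := by
  rw [centeredSquare, Measure.volume_eq_prod, Measure.prod_prod, Real.volume_Icc,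
    ← ENNReal.ofReal_mul (by linarith)]
  ring_nf

lemma diskAt_subset_Icc_prod {a b r : ℝ} (hr : 0 ≤ r) :
    diskAt a b r ⊆ Icc (a - r) (a + r) ×ˢ Icc (b - r) (b + r) := by
  rintro ⟨x, y⟩ h
  simp only [diskAt, mem_ofPred_eq] at h
  have hx : (x - a) ^ 2 ≤ r ^ 2 := by nlinarith [sq_nonneg (y - b)]
  have hy : (y - b) ^ 2 ≤ r ^ 2 := by nlinarith [sq_nonneg (x - a)]
  obtain ⟨hx₁, hx₂⟩ := abs_le_of_sq_le_sq' hx hr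
  obtain ⟨hy₁, hy₂⟩ := abs_le_of_sq_le_sq' hy hr
  exact ⟨⟨by linarith, by linarith⟩, by linarith, by linarith⟩

lemma disjoint_diskAt {a b c d r : ℝ} (h : 4 * r ^ 2 ≤ (a - c) ^ 2 + (b - d) ^ 2) :
    Disjoint (diskAt a b r) (diskAt c d r) := by
  refine Set.disjoint_left.2 fun ⟨x, y⟩ h₁ h₂ => ?_
  simp only [diskAt, mem_ofPred_eq] at h₁ h₂
  nlinarith [sq_nonneg (x - a + (x - c)), sq_nonneg (y - b + (y - d))]

lemma disjoint_diskAt_cornerDisks (r : ℝ) : Disjoint (diskAt r r r) (cornerDisks r) := by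
  simp only [cornerDisks, disjoint_union_right]
  exact ⟨⟨disjoint_diskAt (by nlinarith), disjoint_diskAt (by nlinarith)⟩,
    disjoint_diskAt (by nlinarith)⟩

lemma preimage_add_diskAt (v : ℝ × ℝ) (a b r : ℝ) :
    (v + ·) ⁻¹' diskAt a b r = diskAt (a - v.1) (b - v.2) r := by
  ext p
  simp only [diskAt, mem_preimage, mem_ofPred_eq, Prod.fst_add, Prod.snd_add]
  ring_nf

lemma volume_Icc_inter_diskAt_add (v x y : ℝ × ℝ) (a b r : ℝ) :
    volume (Icc (x + v) (y + v) ∩ diskAt (a + v.1) (b + v.2) r) =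
      volume (Icc x y ∩ diskAt a b r) := by
  rw [← measure_preimage_add volume v, preimage_inter, add_comm x, add_comm y,
    preimage_const_add_Icc, preimage_add_diskAt]
  simp

lemma measure_inter_union_of_null {α : Type*} [MeasurableSpace α] {μ : Measure α}
    {s t u : Set α} (hs : MeasurableSet s) (hu : MeasurableSet u) (htu : μ (t ∩ u) = 0) :
    μ (s ∩ (t ∪ u)) = μ (s ∩ t) + μ (s ∩ u) := by
  rw [inter_union_distrib_left]
  exact measure_union₀ (hs.inter hu).nullMeasurableSet
    (measure_mono_null (inter_subset_inter inter_subset_right inter_subset_right) htu)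

lemma volume_inter_union_prod_union {s : Set (ℝ × ℝ)} (hs : MeasurableSet s)
    {I J K L : Set ℝ} (hI : MeasurableSet I) (hJ : MeasurableSet J) (hK : MeasurableSet K)
    (hL : MeasurableSet L)
    (hIJ : volume (I ∩ J) = 0) (hKL : volume (K ∩ L) = 0) :
    volume (s ∩ (I ∪ J) ×ˢ (K ∪ L)) = volume (s ∩ I ×ˢ K) + volume (s ∩ J ×ˢ K) +
      (volume (s ∩ I ×ˢ L) + volume (s ∩ J ×ˢ L)) := by
  have hnull {A B C D : Set ℝ} (h : volume (A ∩ C) = 0 ∨ volume (B ∩ D) = 0) :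
      volume (A ×ˢ B ∩ C ×ˢ D) = 0 := by
    rw [prod_inter_prod, Measure.volume_eq_prod, Measure.prod_prod]
    rcases h with h | h <;> simp [h]
  rw [prod_union, measure_inter_union_of_null hs ((hI.union hJ).prod hL) (hnull (.inr hKL)),
    union_prod, union_prod,
    measure_inter_union_of_null hs (hJ.prod hK) (hnull (.inl hIJ)),
    measure_inter_union_of_null hs (hJ.prod hL) (hnull (.inl hIJ))]

lemma volume_diskAt_eq_sum_tiles {r : ℝ} (hr : 0 ≤ r) :
    volume (diskAt r r r) =
      volume (diskAt r r r ∩ centeredSquare r) +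
        volume (diskAt r r r ∩ Icc r (3 * r) ×ˢ Icc (-r) r) +
          (volume (diskAt r r r ∩ Icc (-r) r ×ˢ Icc r (3 * r)) +
            volume (diskAt r r r ∩ Icc r (3 * r) ×ˢ Icc r (3 * r))) := by
  have hsplit : Icc (-r) r ∪ Icc r (3 * r) = Icc (-r) (3 * r) :=
    Icc_union_Icc_eq_Icc (by linarith) (by linarith)
  have hline : volume (Icc (-r) r ∩ Icc r (3 * r)) = 0 := by
    rw [Icc_inter_Icc_eq_singleton (by linarith) (by linarith), Real.volume_singleton]
  have hcover :
      diskAt r r r ⊆ (Icc (-r) r ∪ Icc r (3 * r)) ×ˢ (Icc (-r) r ∪ Icc r (3 * r)) := by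
    rw [hsplit]
    refine (diskAt_subset_Icc_prod hr).trans (prod_mono ?_ ?_) <;>
      exact Icc_subset_Icc (by linarith) (by linarith)
  rw [centeredSquare, ← volume_inter_union_prod_union (measurableSet_diskAt r r r)
    measurableSet_Icc measurableSet_Icc measurableSet_Icc measurableSet_Icc hline hline,
    inter_eq_self_of_subset_left hcover]

lemma volume_centeredSquare_inter_cornerDisks (r : ℝ) :
    volume (centeredSquare r ∩ cornerDisks r) =
      volume (centeredSquare r ∩ diskAt (-r) r r) +
        volume (centeredSquare r ∩ diskAt (-r) (-r) r) +
          volume (centeredSquare r ∩ diskAt r (-r) r) := by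
  have hdisj {a b c d : ℝ} (h : 4 * r ^ 2 ≤ (a - c) ^ 2 + (b - d) ^ 2) :
      Disjoint (centeredSquare r ∩ diskAt a b r) (centeredSquare r ∩ diskAt c d r) :=
    (disjoint_diskAt h).mono inter_subset_right inter_subset_right
  have hS := measurableSet_centeredSquare r
  rw [cornerDisks, inter_union_distrib_left, inter_union_distrib_left,
    measure_union ((hdisj (by nlinarith)).union_left (hdisj (by nlinarith)))
      (hS.inter (measurableSet_diskAt _ _ _)),
    measure_union (hdisj (by nlinarith)) (hS.inter (measurableSet_diskAt _ _ _))]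

lemma volume_centeredSquare_inter_diskAt_sub (r : ℝ) (v : ℝ × ℝ) :
    volume (centeredSquare r ∩ diskAt (r - v.1) (r - v.2) r) =
      volume (diskAt r r r ∩ Icc (v.1 - r) (v.1 + r) ×ˢ Icc (v.2 - r) (v.2 + r)) := by
  rw [inter_comm (diskAt r r r), centeredSquare, Icc_prod_Icc, Icc_prod_Icc,
    ← volume_Icc_inter_diskAt_add v]
  congr 3 <;> (try ext) <;> simp <;> ring

lemma volume_diskAt_eq_add {r : ℝ} (hr : 0 ≤ r) :
    volume (diskAt r r r) =
      volume (diskAt r r r ∩ centeredSquare r) + volume (centeredSquare r ∩ cornerDisks r) := by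
  have h₁ := volume_centeredSquare_inter_diskAt_sub r (2 * r, 0)
  have h₂ := volume_centeredSquare_inter_diskAt_sub r (2 * r, 2 * r)
  have h₃ := volume_centeredSquare_inter_diskAt_sub r (0, 2 * r)
  ring_nf at h₁ h₂ h₃
  rw [volume_diskAt_eq_sum_tiles hr, volume_centeredSquare_inter_cornerDisks]
  ring_nf
  rw [h₁, h₂, h₃]
  ring

/-- The area of the region bounded by a 3-bulb of radius `r` equals `4r²`,
the area of a square of side length `2r`. -/
theorem area_three_bulb (r : ℝ) (hr : 0 < r) :
    volume (threeBulbRegion r) = ENNReal.ofReal (4 * r ^ 2) := by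
  set D := diskAt r r r
  set S := centeredSquare r
  have hD_inter : D ∩ (S \ cornerDisks r) = D ∩ S := by
    rw [← inter_sdiff_assoc,
      ((disjoint_diskAt_cornerDisks r).mono_left inter_subset_left).sdiff_eq_left]
  have hfin : volume (D ∩ S) ≠ ⊤ :=
    measure_ne_top_of_subset inter_subset_right (by
      rw [volume_centeredSquare hr.le]; exact ENNReal.ofReal_ne_top)
  rw [← volume_centeredSquare hr.le, ← ENNReal.add_left_inj hfin]
  calc volume (threeBulbRegion r) + volume (D ∩ S)
      = volume D + volume (S \ cornerDisks r) := by
        rw [threeBulbRegion_eq, ← hD_inter]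
        exact measure_union_add_inter _
          ((measurableSet_centeredSquare r).diff (measurableSet_cornerDisks r))
    _ = volume (S ∩ cornerDisks r) + volume (S \ cornerDisks r) + volume (D ∩ S) := by
        rw [volume_diskAt_eq_add hr.le]; ring
    _ = volume S + volume (D ∩ S) := by
        rw [measure_inter_add_sdiff _ (measurableSet_cornerDisks r)]
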